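/- arXiv:2310.05501 — 3 statements merged into one kernel-verified Lean document; each statement's English description precedes it below -/
import Mathlib

section
/- Let J̃ ∈ ℝ^{m×n} with reduced singular value decomposition J̃ = U Σ V^T where Σ is the r̃ × r̃ diagonal matrix of nonzero singular values, each at least √σ_min > 0, and V ∈ ℝ^{n×r̃} has orthonormal columns. Let R̃ ∈ ℝ^m, g = (1/m) J̃^T R̃, and suppose s ∈ ℝ^n satisfies s^T J̃^T (J̃ s + R̃) = 0 and ‖V^T s‖ ≥ μ ‖s‖ for some μ > 0. Then −s^T g ≥ (σ_min μ² / m) ‖s‖². -/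
open scoped RealInnerProductSpace
open Matrix

private lemma transpose_eq_conjTranspose {m n : ℕ} (A : Matrix (Fin m) (Fin n) ℝ) :
    Aᵀ = Aᴴ := by
  ext i j; simp [Matrix.conjTranspose_apply]

private lemma inner_transpose {m n : ℕ} (A : Matrix (Fin m) (Fin n) ℝ)
    (x : EuclideanSpace ℝ (Fin n)) (y : EuclideanSpace ℝ (Fin m)) :
    ⟪x, Matrix.toEuclideanLin Aᵀ y⟫ = ⟪Matrix.toEuclideanLin A x, y⟫ := by
  rw [transpose_eq_conjTranspose, Matrix.toEuclideanLin_conjTranspose_eq_adjoint,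
    LinearMap.adjoint_inner_right]

private lemma toEuclideanLin_mul {m n k : ℕ} (A : Matrix (Fin m) (Fin n) ℝ)
    (B : Matrix (Fin n) (Fin k) ℝ) (x : EuclideanSpace ℝ (Fin k)) :
    Matrix.toEuclideanLin (A * B) x = Matrix.toEuclideanLin A (Matrix.toEuclideanLin B x) := by
  simp [Matrix.toEuclideanLin_apply, Matrix.mulVec_mulVec]

set_option maxHeartbeats 1000000 in
/-- Sufficient-decrease inequality for the inexact Gauss-Newton step. If
`J̃ = U Σ Vᵀ` is a reduced SVD (U, V with orthonormal columns, Σ diagonal with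
entries at least `√σ_min > 0`), `s` satisfies the Krylov orthogonality
`sᵀJ̃ᵀ(J̃s + R̃) = 0` and `‖Vᵀs‖ ≥ μ‖s‖`, then `−sᵀg ≥ (σ_min μ²/m)‖s‖²`
for `g = (1/m) J̃ᵀ R̃`. -/
theorem step_sufficient_decrease (m n r : ℕ)
    (U : Matrix (Fin m) (Fin r) ℝ) (V : Matrix (Fin n) (Fin r) ℝ) (d : Fin r → ℝ)
    (J : Matrix (Fin m) (Fin n) ℝ)
    (hU : Uᵀ * U = 1) (hV : Vᵀ * V = 1)
    (hJ : J = U * Matrix.diagonal d * Vᵀ)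
    (σmin : ℝ) (hσmin : 0 < σmin) (hd : ∀ i, Real.sqrt σmin ≤ d i)
    (R : EuclideanSpace ℝ (Fin m)) (mr : ℝ) (hmr : 0 < mr)
    (g : EuclideanSpace ℝ (Fin n))
    (hg : g = (1 / mr) • Matrix.toEuclideanLin Jᵀ R)
    (s : EuclideanSpace ℝ (Fin n))
    (horth : ⟪s, Matrix.toEuclideanLin Jᵀ (Matrix.toEuclideanLin J s + R)⟫ = 0)
    (μ : ℝ) (hμ : 0 < μ)
    (hVs : ‖Matrix.toEuclideanLin Vᵀ s‖ ≥ μ * ‖s‖) :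
    -⟪s, g⟫ ≥ σmin * μ ^ 2 / mr * ‖s‖ ^ 2 := by
  -- Krylov orthogonality gives ⟪Js, R⟫ = -‖Js‖²
  have horth' : ‖Matrix.toEuclideanLin J s‖ ^ 2 + ⟪Matrix.toEuclideanLin J s, R⟫ = 0 := by
    have := horth
    rw [inner_transpose, inner_add_right, real_inner_self_eq_norm_sq] at this
    linarith
  -- -⟪s, g⟫ = (1/mr) ‖Js‖²
  have hsg : -⟪s, g⟫ = (1 / mr) * ‖Matrix.toEuclideanLin J s‖ ^ 2 := by
    rw [hg, real_inner_smul_right, inner_transpose]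
    have h : ⟪Matrix.toEuclideanLin J s, R⟫ = -‖Matrix.toEuclideanLin J s‖ ^ 2 := by
      linarith
    rw [h]; ring
  -- ‖U z‖ = ‖z‖ for all z
  have hUnorm : ∀ z : EuclideanSpace ℝ (Fin r),
      ‖Matrix.toEuclideanLin U z‖ ^ 2 = ‖z‖ ^ 2 := by
    intro z
    rw [← real_inner_self_eq_norm_sq, ← inner_transpose, ← toEuclideanLin_mul, hU]
    have h1 : Matrix.toEuclideanLin (1 : Matrix (Fin r) (Fin r) ℝ) z = z := by
      simp [Matrix.toEuclideanLin_apply]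
    rw [h1, real_inner_self_eq_norm_sq]
  set y : EuclideanSpace ℝ (Fin r) := Matrix.toEuclideanLin Vᵀ s with hy
  -- ‖Σ y‖² ≥ σmin ‖y‖²
  have hdiag : ‖Matrix.toEuclideanLin (Matrix.diagonal d) y‖ ^ 2 ≥ σmin * ‖y‖ ^ 2 := by
    rw [← real_inner_self_eq_norm_sq, ← real_inner_self_eq_norm_sq]
    have happ : ∀ i, (Matrix.toEuclideanLin (Matrix.diagonal d) y) i = d i * y i := by
      intro i
      simp [Matrix.toEuclideanLin_apply, Matrix.mulVec_diagonal]
    rw [PiLp.inner_apply, PiLp.inner_apply]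
    simp only [RCLike.inner_apply, starRingEnd_apply, star_trivial, happ]
    rw [Finset.mul_sum]
    apply Finset.sum_le_sum
    intro i _
    have hdi : σmin ≤ d i ^ 2 := by
      have h0 : (0:ℝ) ≤ Real.sqrt σmin := Real.sqrt_nonneg _
      nlinarith [hd i, Real.sq_sqrt hσmin.le]
    nlinarith [sq_nonneg (y i), hdi]
  -- ‖Js‖² ≥ σmin μ² ‖s‖²
  have hJs : ‖Matrix.toEuclideanLin J s‖ ^ 2 ≥ σmin * μ ^ 2 * ‖s‖ ^ 2 := by
    have h1 : Matrix.toEuclideanLin J s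
        = Matrix.toEuclideanLin U (Matrix.toEuclideanLin (Matrix.diagonal d) y) := by
      rw [hJ, toEuclideanLin_mul, toEuclideanLin_mul]
    have h2 : ‖y‖ ^ 2 ≥ μ ^ 2 * ‖s‖ ^ 2 := by
      have h0 : (0:ℝ) ≤ μ * ‖s‖ := mul_nonneg hμ.le (norm_nonneg _)
      nlinarith [hVs]
    rw [h1, hUnorm]
    nlinarith [hdiag, h2]
  rw [hsg]
  have h := mul_le_mul_of_nonneg_left hJs (inv_nonneg.mpr hmr.le)
  have hmr' : 1 / mr = mr⁻¹ := one_div mr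
  rw [hmr', div_eq_mul_inv]
  nlinarith [h]
end

section
/- Let f : ℝ^n → ℝ be differentiable with L-Lipschitz gradient, let c ∈ (0,1), α > 0, κ₁ > 0, κ₂ > 0, and let x, s, g ∈ ℝ^n and t > 0 satisfy: ‖∇f(x) − g‖ ≤ α t ‖g‖, κ₂ ‖g‖ ≤ ‖s‖ ≤ κ₁ ‖g‖, and −g^T s ≥ (1/κ₁) ‖s‖². If t ≤ 2(1−c)κ₂ / ((κ₂ L + 2α) κ₁), then the Armijo condition f(x + t s) ≤ f(x) + c t s^T g holds. -/
/-!
By the descent lemma, `f (x + t s) ≤ f x + t ⟪∇f x, s⟫ + (L/2) t² ‖s‖²`. Splitting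
`∇f x = (∇f x - g) + g`, the accuracy of `g` bounds the error term by `(α/κ₂) t² ‖s‖²`, and the
sufficient decrease `⟪g, s⟫ ≤ -‖s‖²/κ₁` of the step pays for this term and the curvature term
as soon as `t (L/2 + α/κ₂) ≤ (1 - c)/κ₁`, which is the step-length condition.
-/

open scoped RealInnerProductSpace

section LipschitzGradient

variable {E : Type*} [NormedAddCommGroup E] [InnerProductSpace ℝ E] [CompleteSpace E]
  {f : E → ℝ} {L : ℝ}

theorem hasDerivAt_comp_add_smul {x v : E} {u : ℝ} (hf : DifferentiableAt ℝ f (x + u • v)) :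
    HasDerivAt (fun u : ℝ => f (x + u • v)) ⟪gradient f (x + u • v), v⟫ u := by
  have hline : HasDerivAt (fun u : ℝ => x + u • v) v u := by
    simpa using ((hasDerivAt_id u).smul_const v).const_add x
  have := hf.hasFDerivAt.comp_hasDerivAt u hline
  rwa [hf.hasGradientAt.fderiv_apply] at this

theorem inner_gradient_add_smul_sub_le (hL : ∀ x y, ‖gradient f x - gradient f y‖ ≤ L * ‖x - y‖)
    (x v : E) {u : ℝ} (hu : 0 ≤ u) :
    ⟪gradient f (x + u • v) - gradient f x, v⟫ ≤ L * u * ‖v‖ ^ 2 :=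
  calc ⟪gradient f (x + u • v) - gradient f x, v⟫
      ≤ ‖gradient f (x + u • v) - gradient f x‖ * ‖v‖ := real_inner_le_norm _ _
    _ ≤ L * ‖(x + u • v) - x‖ * ‖v‖ := by gcongr; exact hL _ _
    _ = L * u * ‖v‖ ^ 2 := by
      rw [add_sub_cancel_left, norm_smul, Real.norm_of_nonneg hu]; ring

theorem image_add_le_of_lipschitz_gradient (hf : Differentiable ℝ f)
    (hL : ∀ x y, ‖gradient f x - gradient f y‖ ≤ L * ‖x - y‖) (x v : E) :
    f (x + v) ≤ f x + ⟪gradient f x, v⟫ + L / 2 * ‖v‖ ^ 2 := by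
  set φ : ℝ → ℝ := fun u => f (x + u • v) - u * ⟪gradient f x, v⟫ - L / 2 * ‖v‖ ^ 2 * u ^ 2
  have hφ : ∀ u, HasDerivAt φ
      (⟪gradient f (x + u • v) - gradient f x, v⟫ - L * u * ‖v‖ ^ 2) u := fun u => by
    refine (((hasDerivAt_comp_add_smul (hf _)).sub ((hasDerivAt_id u).mul_const _)).sub
      ((hasDerivAt_pow 2 u).const_mul _)).congr_deriv ?_
    rw [inner_sub_left]; simp; ring
  have hanti : AntitoneOn φ (Set.Ici 0) :=
    antitoneOn_of_hasDerivWithinAt_nonpos (convex_Ici 0)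
      (fun u _ => (hφ u).continuousAt.continuousWithinAt)
      (fun u _ => (hφ u).hasDerivWithinAt)
      (fun u hu => sub_nonpos.2 <| inner_gradient_add_smul_sub_le hL x v (interior_subset hu))
  have hφ01 := hanti (Set.mem_Ici.2 le_rfl) (Set.mem_Ici.2 zero_le_one) zero_le_one
  simp only [φ, one_smul, zero_smul, add_zero, one_pow, one_mul, zero_mul, mul_one, sub_zero,
    ne_eq, OfNat.ofNat_ne_zero, not_false_eq_true, zero_pow] at hφ01
  linarith

end LipschitzGradient

theorem inner_sub_le_of_norm_sub_le {E : Type*} [NormedAddCommGroup E] [InnerProductSpace ℝ E]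
    {a g s : E} {ε κ : ℝ} (hε : 0 ≤ ε) (hκ : 0 < κ) (hacc : ‖a - g‖ ≤ ε * ‖g‖)
    (hlow : κ * ‖g‖ ≤ ‖s‖) : ⟪a - g, s⟫ ≤ ε / κ * ‖s‖ ^ 2 :=
  calc ⟪a - g, s⟫ ≤ ‖a - g‖ * ‖s‖ := real_inner_le_norm _ _
    _ ≤ ε * ‖g‖ * ‖s‖ := by gcongr
    _ ≤ ε * (‖s‖ / κ) * ‖s‖ := by gcongr; rwa [le_div_iff₀' hκ]
    _ = ε / κ * ‖s‖ ^ 2 := by ring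

theorem armijo_fulfillment_general (n : ℕ) (f : EuclideanSpace ℝ (Fin n) → ℝ)
    (hf : Differentiable ℝ f) (L : ℝ)
    (hL : ∀ x y, ‖gradient f x - gradient f y‖ ≤ L * ‖x - y‖)
    (c α κ₁ κ₂ : ℝ) (hc1 : c < 1) (hα : 0 < α)
    (hκ₁ : 0 < κ₁) (hκ₂ : 0 < κ₂)
    (x s g : EuclideanSpace ℝ (Fin n)) (t : ℝ) (ht0 : 0 < t)
    (hacc : ‖gradient f x - g‖ ≤ α * t * ‖g‖)
    (hlow : κ₂ * ‖g‖ ≤ ‖s‖)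
    (hdesc : -⟪g, s⟫ ≥ (1 / κ₁) * ‖s‖ ^ 2)
    (htsmall : t ≤ 2 * (1 - c) * κ₂ / ((κ₂ * L + 2 * α) * κ₁)) :
    f (x + t • s) ≤ f x + c * t * ⟪s, g⟫ := by
  have hD : 0 < (κ₂ * L + 2 * α) * κ₁ :=
    (div_pos_iff_of_pos_left (by nlinarith)).mp (ht0.trans_le htsmall)
  have hstep : 0 ≤ (1 - c) / κ₁ - t * (L / 2 + α / κ₂) := by
    rw [show (1 - c) / κ₁ - t * (L / 2 + α / κ₂)
        = (2 * (1 - c) * κ₂ - t * ((κ₂ * L + 2 * α) * κ₁)) / (2 * κ₁ * κ₂) by field_simp]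
    exact div_nonneg (sub_nonneg.2 ((le_div_iff₀ hD).mp htsmall)) (by positivity)
  have herr := inner_sub_le_of_norm_sub_le (by positivity) hκ₂ hacc hlow
  calc f (x + t • s) ≤ f x + t * ⟪gradient f x, s⟫ + L / 2 * (t * ‖s‖) ^ 2 := by
        simpa [inner_smul_right, norm_smul, abs_of_pos ht0] using
          image_add_le_of_lipschitz_gradient hf hL x (t • s)
    _ = f x + c * t * ⟪s, g⟫ +
          t * (⟪gradient f x - g, s⟫ + L / 2 * t * ‖s‖ ^ 2 - (1 - c) * -⟪g, s⟫) := by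
        rw [inner_sub_left, real_inner_comm g s]; ring
    _ ≤ f x + c * t * ⟪s, g⟫ +
          t * (α * t / κ₂ * ‖s‖ ^ 2 + L / 2 * t * ‖s‖ ^ 2 - (1 - c) * (1 / κ₁ * ‖s‖ ^ 2)) := by
        gcongr
    _ = f x + c * t * ⟪s, g⟫ - t * ‖s‖ ^ 2 * ((1 - c) / κ₁ - t * (L / 2 + α / κ₂)) := by ring
    _ ≤ f x + c * t * ⟪s, g⟫ := sub_le_self _ (by positivity)

/-- Armijo fulfillment for true iterations with a small step length: if the
stochastic gradient `g` is `α t ‖g‖`-accurate, the step `s` satisfies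
`κ₂‖g‖ ≤ ‖s‖ ≤ κ₁‖g‖` and `−gᵀs ≥ (1/κ₁)‖s‖²`, and
`t ≤ 2(1−c)κ₂/((κ₂L + 2α)κ₁)`, then `f(x + ts) ≤ f(x) + c t sᵀg`. -/
theorem armijo_fulfillment (n : ℕ) (f : EuclideanSpace ℝ (Fin n) → ℝ)
    (hf : Differentiable ℝ f) (L : ℝ)
    (hL : ∀ x y, ‖gradient f x - gradient f y‖ ≤ L * ‖x - y‖)
    (c α κ₁ κ₂ : ℝ) (hc0 : 0 < c) (hc1 : c < 1) (hα : 0 < α)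
    (hκ₁ : 0 < κ₁) (hκ₂ : 0 < κ₂)
    (x s g : EuclideanSpace ℝ (Fin n)) (t : ℝ) (ht0 : 0 < t)
    (hacc : ‖gradient f x - g‖ ≤ α * t * ‖g‖)
    (hlow : κ₂ * ‖g‖ ≤ ‖s‖) (hup : ‖s‖ ≤ κ₁ * ‖g‖)
    (hdesc : -⟪g, s⟫ ≥ (1 / κ₁) * ‖s‖ ^ 2)
    (htsmall : t ≤ 2 * (1 - c) * κ₂ / ((κ₂ * L + 2 * α) * κ₁)) :
    f (x + t • s) ≤ f x + c * t * ⟪s, g⟫ :=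
  armijo_fulfillment_general n f hf L hL c α κ₁ κ₂ hc1 hα hκ₁ hκ₂ x s g t ht0 hacc hlow hdesc
    htsmall
end

section
/- Suppose x₊ = x + t s with f(x₊) ≤ f(x) + c t s^T g, where c ∈ (0, 1), 0 < t ≤ t_max, β > 0, and κ₁, κ₂ > 0 are constants with −s^T g ≥ (κ₂²/κ₁) ‖g‖² and ‖∇f(x)‖ ≤ (1 + β t) ‖g‖. Then f(x₀) − f(x₊) ≥ (f(x₀) − f(x)) + c (κ₂²/κ₁) (t / (1 + β t_max)²) ‖∇f(x)‖² for any reference point x₀. -/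
open scoped RealInnerProductSpace

/-- Progress estimate for true and successful iterations: if the Armijo condition
holds at `x₊ = x + t s`, `−sᵀg ≥ (κ₂²/κ₁)‖g‖²` and `‖∇f(x)‖ ≤ (1 + βt)‖g‖`, then
`f(x₀) − f(x₊) ≥ (f(x₀) − f(x)) + c (κ₂²/κ₁) (t/(1 + β t_max)²) ‖∇f(x)‖²`. -/
theorem progress_true_successful (n : ℕ) (f : EuclideanSpace ℝ (Fin n) → ℝ)
    (x₀ x s g : EuclideanSpace ℝ (Fin n)) (xplus : EuclideanSpace ℝ (Fin n))
    (c t tmax β κ₁ κ₂ : ℝ)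
    (hxplus : xplus = x + t • s)
    (hc0 : 0 < c) (hc1 : c < 1) (ht0 : 0 < t) (htmax : t ≤ tmax)
    (hβ : 0 < β) (hκ₁ : 0 < κ₁) (hκ₂ : 0 < κ₂)
    (harmijo : f xplus ≤ f x + c * t * ⟪s, g⟫)
    (hdesc : -⟪s, g⟫ ≥ κ₂ ^ 2 / κ₁ * ‖g‖ ^ 2)
    (hgrad : ‖gradient f x‖ ≤ (1 + β * t) * ‖g‖) :
    f x₀ - f xplus ≥ (f x₀ - f x) +
      c * (κ₂ ^ 2 / κ₁) * (t / (1 + β * tmax) ^ 2) * ‖gradient f x‖ ^ 2 := by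
  set A := ‖gradient f x‖ with hA
  set G := ‖g‖ with hG
  have hD : (0:ℝ) < 1 + β * tmax := by nlinarith
  have hG0 : 0 ≤ G := norm_nonneg _
  have hA0 : 0 ≤ A := norm_nonneg _
  have hmul : (1 + β * t) * G ≤ (1 + β * tmax) * G :=
    mul_le_mul_of_nonneg_right (by nlinarith) hG0
  have hA2 : A ^ 2 ≤ (1 + β * tmax) ^ 2 * G ^ 2 := by nlinarith
  have hk : 0 < κ₂ ^ 2 / κ₁ := by positivity
  have key : c * (κ₂ ^ 2 / κ₁) * (t / (1 + β * tmax) ^ 2) * A ^ 2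
      ≤ c * t * (κ₂ ^ 2 / κ₁ * G ^ 2) := by
    have h2 : A ^ 2 / (1 + β * tmax) ^ 2 ≤ G ^ 2 := by
      rw [div_le_iff₀ (by positivity)]; nlinarith
    calc c * (κ₂ ^ 2 / κ₁) * (t / (1 + β * tmax) ^ 2) * A ^ 2
        = c * t * (κ₂ ^ 2 / κ₁ * (A ^ 2 / (1 + β * tmax) ^ 2)) := by ring
      _ ≤ c * t * (κ₂ ^ 2 / κ₁ * G ^ 2) := by
          apply mul_le_mul_of_nonneg_left _ (by positivity)
          exact mul_le_mul_of_nonneg_left h2 (le_of_lt hk)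
  have h3 : c * t * ⟪s, g⟫ ≤ -(c * t * (κ₂ ^ 2 / κ₁ * G ^ 2)) := by
    have := mul_le_mul_of_nonneg_left hdesc (le_of_lt (mul_pos hc0 ht0))
    linarith [this]
  linarith
end
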